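/- arXiv:2309.02994 — 2 statements merged into one kernel-verified Lean document; each statement's English description precedes it below -/
import Mathlib

section
/- Let x* ∈ C minimize a constrained regularized least-squares problem x_{n,λ} = argmin_{x∈C} Σ_{i=1}^n ‖y_i − A_i x‖² + λ‖x‖², where C is nonempty closed convex and y_i = A_i x* + ε_i. Then the minimizer satisfies the deterministic inequality ‖x_{n,λ} − x*‖_{M̄_n} ≤ ‖Σ_{i=1}^n A_i* ε_i‖_{M̄_n⁻¹} + λ‖x*‖_{M̄_n⁻¹}, where M̄_n = Σ_{i=1}^n A_i* A_i + λ id. -/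
/-!
The objective is the quadratic `x ⬝ M̄ x - 2 ⟪∑ Aᵢᵀ yᵢ, x⟫ + const`, so minimality of `x̂` on the
convex set `C` gives the variational inequality `0 ≤ ⟪M̄ x̂ - ∑ Aᵢᵀ yᵢ, x* - x̂⟫`. Since
`∑ Aᵢᵀ yᵢ = M̄ x* - λ x* + ∑ Aᵢᵀ εᵢ`, it reads `‖x̂ - x*‖²_M̄ ≤ ⟪x̂ - x*, ∑ Aᵢᵀ εᵢ - λ x*⟫`, and the
Cauchy–Schwarz inequality `⟪u, w⟫ ≤ ‖u‖_M̄ ‖w‖_{M̄⁻¹}` bounds the right side by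
`‖x̂ - x*‖_M̄ (‖∑ Aᵢᵀ εᵢ‖_{M̄⁻¹} + λ ‖x*‖_{M̄⁻¹})`.
-/

open Matrix Filter Topology

theorem nonneg_of_forall_mem_Ioc_nonneg_add_mul {a b : ℝ}
    (h : ∀ t ∈ Set.Ioc (0 : ℝ) 1, 0 ≤ a + t * b) : 0 ≤ a := by
  have hlim : Tendsto (fun t : ℝ => a + t * b) (𝓝[>] 0) (𝓝 a) := by
    have : Continuous (fun t : ℝ => a + t * b) := by fun_prop
    simpa using (this.tendsto 0).mono_left nhdsWithin_le_nhds
  refine ge_of_tendsto hlim ?_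
  filter_upwards [Ioc_mem_nhdsGT (zero_lt_one' ℝ)] with t ht using h t ht

theorem Real.sqrt_le_of_le_sqrt_mul {a c : ℝ} (hc : 0 ≤ c) (h : a ≤ √a * c) : √a ≤ c := by
  rcases le_or_gt a 0 with ha | ha
  · rwa [Real.sqrt_eq_zero'.mpr ha]
  · refine le_of_mul_le_mul_left ?_ (Real.sqrt_pos.mpr ha)
    rwa [Real.mul_self_sqrt ha.le]

namespace Matrix

variable {ι k m : Type*} [Fintype k] [Fintype m]

theorem IsSymm.dotProduct_mulVec_comm {R : Type*} [CommSemiring R] {B : Matrix k k R}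
    (hB : B.IsSymm) (u w : k → R) : u ⬝ᵥ (B *ᵥ w) = w ⬝ᵥ (B *ᵥ u) := by
  rw [dotProduct_mulVec, ← mulVec_transpose, hB.eq, dotProduct_comm]

theorem PosSemidef.dotProduct_mulVec_le_sqrt_mul_sqrt {B : Matrix k k ℝ} (hB : B.PosSemidef)
    (u w : k → ℝ) : u ⬝ᵥ (B *ᵥ w) ≤ √(u ⬝ᵥ (B *ᵥ u)) * √(w ⬝ᵥ (B *ᵥ w)) := by
  classical
  let F : LinearMap.BilinForm ℝ (k → ℝ) := toLinearMap₂' ℝ B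
  have hF : ∀ x y, F x y = x ⬝ᵥ (B *ᵥ y) := toLinearMap₂'_apply' B
  have hnonneg : ∀ x, 0 ≤ F x x := fun x => by simpa [hF] using hB.dotProduct_mulVec_nonneg x
  have hsymm : LinearMap.IsSymm F := LinearMap.BilinForm.isSymm_iff.mp
    ⟨fun x y => by
      simpa only [hF] using (isHermitian_iff_isSymm.mp hB.isHermitian).dotProduct_mulVec_comm x y⟩
  have hcs := LinearMap.BilinForm.apply_sq_le_of_symm F hnonneg hsymm u w
  simp only [hF] at hcs
  rw [← Real.sqrt_mul (by simpa using hB.dotProduct_mulVec_nonneg u)]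
  exact Real.le_sqrt_of_sq_le hcs

theorem PosDef.dotProduct_le_sqrt_mul_sqrt_inv [DecidableEq k] {M : Matrix k k ℝ} (hM : M.PosDef)
    (u w : k → ℝ) : u ⬝ᵥ w ≤ √(u ⬝ᵥ (M *ᵥ u)) * √(w ⬝ᵥ (M⁻¹ *ᵥ w)) := by
  have hw : M *ᵥ (M⁻¹ *ᵥ w) = w := by
    rw [mulVec_mulVec, mul_nonsing_inv _ (isUnit_iff_ne_zero.mpr hM.det_pos.ne'), one_mulVec]
  have hcs := hM.posSemidef.dotProduct_mulVec_le_sqrt_mul_sqrt u (M⁻¹ *ᵥ w)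
  rwa [hw, dotProduct_comm (M⁻¹ *ᵥ w)] at hcs

theorem IsSymm.dotProduct_sub_nonneg_of_isMinOn {M : Matrix k k ℝ} (hM : M.IsSymm) {b : k → ℝ}
    {c : ℝ} {C : Set (k → ℝ)} (hC : Convex ℝ C) {xh x : k → ℝ} (hxh : xh ∈ C) (hx : x ∈ C)
    (hmin : IsMinOn (fun x => x ⬝ᵥ (M *ᵥ x) - 2 * (b ⬝ᵥ x) + c) C xh) :
    0 ≤ (M *ᵥ xh - b) ⬝ᵥ (x - xh) := by
  set d := x - xh
  refine nonneg_of_forall_mem_Ioc_nonneg_add_mul (b := d ⬝ᵥ (M *ᵥ d) / 2) fun t ht => ?_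
  have hle := isMinOn_iff.mp hmin _ (hC.add_smul_sub_mem hxh hx ⟨ht.1.le, ht.2⟩)
  have hexp : (xh + t • d) ⬝ᵥ (M *ᵥ (xh + t • d)) - 2 * (b ⬝ᵥ (xh + t • d)) + c
      = (xh ⬝ᵥ (M *ᵥ xh) - 2 * (b ⬝ᵥ xh) + c)
        + 2 * t * ((M *ᵥ xh - b) ⬝ᵥ d + t * (d ⬝ᵥ (M *ᵥ d) / 2)) := by
    simp only [mulVec_add, mulVec_smul, dotProduct_add, add_dotProduct, dotProduct_smul,
      smul_dotProduct, dotProduct_sub, smul_eq_mul, hM.dotProduct_mulVec_comm xh d,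
      dotProduct_comm _ d]
    ring
  rw [hexp] at hle
  nlinarith [ht.1]

theorem sum_residual_add_ridge_eq [DecidableEq k] (s : Finset ι) (A : ι → Matrix m k ℝ)
    (y : ι → m → ℝ) (lam : ℝ) (x : k → ℝ) :
    ∑ i ∈ s, (y i - A i *ᵥ x) ⬝ᵥ (y i - A i *ᵥ x) + lam * (x ⬝ᵥ x)
      = x ⬝ᵥ ((∑ i ∈ s, (A i)ᵀ * A i + lam • 1) *ᵥ x)
        - 2 * ((∑ i ∈ s, (A i)ᵀ *ᵥ y i) ⬝ᵥ x) + ∑ i ∈ s, y i ⬝ᵥ y i := by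
  have hterm : ∀ i, (y i - A i *ᵥ x) ⬝ᵥ (y i - A i *ᵥ x)
      = x ⬝ᵥ (((A i)ᵀ * A i) *ᵥ x) - 2 * (((A i)ᵀ *ᵥ y i) ⬝ᵥ x) + y i ⬝ᵥ y i := by
    intro i
    rw [← mulVec_mulVec, dotProduct_mulVec, vecMul_transpose, mulVec_transpose,
      ← dotProduct_mulVec]
    simp only [sub_dotProduct, dotProduct_sub, dotProduct_comm (A i *ᵥ x) (y i)]
    ring
  simp only [hterm, add_mulVec, sum_mulVec, smul_mulVec, one_mulVec, dotProduct_add,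
    dotProduct_sum, sum_dotProduct, dotProduct_smul, smul_eq_mul, Finset.sum_add_distrib,
    Finset.sum_sub_distrib, Finset.mul_sum]
  ring

theorem posDef_sum_transpose_mul_self_add_smul_one [DecidableEq k] (s : Finset ι)
    (A : ι → Matrix m k ℝ) {lam : ℝ} (hlam : 0 < lam) :
    (∑ i ∈ s, (A i)ᵀ * A i + lam • 1).PosDef :=
  PosDef.posSemidef_add
    (posSemidef_sum s fun i _ => by simpa using posSemidef_conjTranspose_mul_self (A i))
    (PosDef.one.smul hlam)

end Matrix

theorem stmt6_general {dX dY : ℕ} (n : ℕ)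
    (A : ℕ → Matrix (Fin dY) (Fin dX) ℝ) (ε : ℕ → Fin dY → ℝ)
    (y : ℕ → Fin dY → ℝ) (xstar : Fin dX → ℝ)
    (hy : ∀ i, y i = A i *ᵥ xstar + ε i)
    (C : Set (Fin dX → ℝ))
    (hCconvex : Convex ℝ C) (hxstar : xstar ∈ C)
    (lam : ℝ) (hlam : 0 < lam)
    (xh : Fin dX → ℝ) (hmem : xh ∈ C)
    (hmin : IsMinOn (fun x => ∑ i ∈ Finset.Icc 1 n,
        ((y i - A i *ᵥ x) ⬝ᵥ (y i - A i *ᵥ x)) + lam * (x ⬝ᵥ x)) C xh)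
    (Mbar : Matrix (Fin dX) (Fin dX) ℝ)
    (hMbar : Mbar = ∑ i ∈ Finset.Icc 1 n, (A i)ᵀ * A i + lam • 1) :
    Real.sqrt ((xh - xstar) ⬝ᵥ (Mbar *ᵥ (xh - xstar)))
      ≤ Real.sqrt ((∑ i ∈ Finset.Icc 1 n, (A i)ᵀ *ᵥ ε i) ⬝ᵥ
            (Mbar⁻¹ *ᵥ ∑ i ∈ Finset.Icc 1 n, (A i)ᵀ *ᵥ ε i))
        + lam * Real.sqrt (xstar ⬝ᵥ (Mbar⁻¹ *ᵥ xstar)) := by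
  set z := ∑ i ∈ Finset.Icc 1 n, (A i)ᵀ *ᵥ ε i
  set e := xh - xstar
  have hM : Mbar.PosDef := hMbar ▸ posDef_sum_transpose_mul_self_add_smul_one _ A hlam
  have hfirst := (isHermitian_iff_isSymm.mp hM.isHermitian).dotProduct_sub_nonneg_of_isMinOn
    hCconvex hmem hxstar (by simpa only [sum_residual_add_ridge_eq, ← hMbar] using hmin)
  have hgrad : Mbar *ᵥ xh - ∑ i ∈ Finset.Icc 1 n, (A i)ᵀ *ᵥ y i
      = Mbar *ᵥ e - (z - lam • xstar) := by
    have hMx : Mbar *ᵥ xstar = ∑ i ∈ Finset.Icc 1 n, (A i)ᵀ *ᵥ (A i *ᵥ xstar) + lam • xstar := by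
      simp only [hMbar, add_mulVec, sum_mulVec, mulVec_mulVec, smul_mulVec, one_mulVec]
    simp only [e, z, hy, mulVec_sub, mulVec_add, Finset.sum_add_distrib, hMx]
    abel
  have hbasic : e ⬝ᵥ (Mbar *ᵥ e) ≤ e ⬝ᵥ z + lam * (e ⬝ᵥ -xstar) := by
    rw [hgrad, show xstar - xh = -e by simp [e], dotProduct_comm] at hfirst
    simp only [neg_dotProduct, dotProduct_sub, dotProduct_smul, smul_eq_mul,
      dotProduct_neg] at hfirst ⊢
    linarith
  refine Real.sqrt_le_of_le_sqrt_mul (by positivity) (hbasic.trans ?_)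
  calc e ⬝ᵥ z + lam * (e ⬝ᵥ -xstar)
      ≤ √(e ⬝ᵥ (Mbar *ᵥ e)) * √(z ⬝ᵥ (Mbar⁻¹ *ᵥ z))
        + lam * (√(e ⬝ᵥ (Mbar *ᵥ e)) * √(-xstar ⬝ᵥ (Mbar⁻¹ *ᵥ -xstar))) :=
        add_le_add (hM.dotProduct_le_sqrt_mul_sqrt_inv e z)
          (mul_le_mul_of_nonneg_left (hM.dotProduct_le_sqrt_mul_sqrt_inv e _) hlam.le)
    _ = _ := by simp only [mulVec_neg, dotProduct_neg, neg_dotProduct, neg_neg]; ring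

/-- Deterministic error bound for the constrained regularized least-squares minimizer:
`‖x_{n,λ} − x*‖_{M̄_n} ≤ ‖Σ A_i* ε_i‖_{M̄_n⁻¹} + λ‖x*‖_{M̄_n⁻¹}`. -/
theorem stmt6 {dX dY : ℕ} (n : ℕ)
    (A : ℕ → Matrix (Fin dY) (Fin dX) ℝ) (ε : ℕ → Fin dY → ℝ)
    (y : ℕ → Fin dY → ℝ) (xstar : Fin dX → ℝ)
    (hy : ∀ i, y i = A i *ᵥ xstar + ε i)
    (C : Set (Fin dX → ℝ)) (hCne : C.Nonempty) (hCclosed : IsClosed C)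
    (hCconvex : Convex ℝ C) (hxstar : xstar ∈ C)
    (lam : ℝ) (hlam : 0 < lam)
    (xh : Fin dX → ℝ) (hmem : xh ∈ C)
    (hmin : IsMinOn (fun x => ∑ i ∈ Finset.Icc 1 n,
        ((y i - A i *ᵥ x) ⬝ᵥ (y i - A i *ᵥ x)) + lam * (x ⬝ᵥ x)) C xh)
    (Mbar : Matrix (Fin dX) (Fin dX) ℝ)
    (hMbar : Mbar = ∑ i ∈ Finset.Icc 1 n, (A i)ᵀ * A i + lam • 1) :
    Real.sqrt ((xh - xstar) ⬝ᵥ (Mbar *ᵥ (xh - xstar)))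
      ≤ Real.sqrt ((∑ i ∈ Finset.Icc 1 n, (A i)ᵀ *ᵥ ε i) ⬝ᵥ
            (Mbar⁻¹ *ᵥ ∑ i ∈ Finset.Icc 1 n, (A i)ᵀ *ᵥ ε i))
        + lam * Real.sqrt (xstar ⬝ᵥ (Mbar⁻¹ *ᵥ xstar)) :=
  stmt6_general n A ε y xstar hy C hCconvex hxstar lam hlam xh hmem hmin Mbar hMbar
end

section
/- Let G ∈ ℝ^{M×M} be a lower triangular matrix with G + Gᵀ symmetric positive definite, let 2η > 0 be the smallest eigenvalue of G + Gᵀ, and write G̃ = G − η I_M. For ℓ = 1,…,M define G̃^{(ℓ)}_{i,j} = G̃_{i,j} 1_{ℓ ≤ i} and D^{(ℓ)} = 2η I_M + G̃^{(ℓ)} + (G̃ᵀ)^{(ℓ)}, where ((G̃ᵀ)^{(ℓ)})_{i,j} = (G̃ᵀ)_{i,j} 1_{ℓ ≤ i}. Then D^{(ℓ)} is invertible for every ℓ = 1,…,M. -/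
open Matrix

/-- Invertibility of the matrices `D^{(ℓ)} = 2η I + G̃^{(ℓ)} + (G̃ᵀ)^{(ℓ)}` where
`G̃ = G − ηI`, `G` is lower triangular, `G + Gᵀ` is positive definite and `2η > 0`
is its smallest eigenvalue. -/
theorem stmt14 {M : ℕ} (G : Matrix (Fin M) (Fin M) ℝ)
    (hlow : ∀ i j : Fin M, i < j → G i j = 0)
    (hpd : (G + Gᵀ).PosDef)
    (η : ℝ) (hη : 0 < η)
    (hmin : ∀ x : Fin M → ℝ, 2 * η * (x ⬝ᵥ x) ≤ x ⬝ᵥ ((G + Gᵀ) *ᵥ x))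
    (hattain : ∃ x : Fin M → ℝ, x ≠ 0 ∧ x ⬝ᵥ ((G + Gᵀ) *ᵥ x) = 2 * η * (x ⬝ᵥ x))
    (Gt : Matrix (Fin M) (Fin M) ℝ) (hGt : Gt = G - η • 1)
    (D : Fin M → Matrix (Fin M) (Fin M) ℝ)
    (hD : ∀ ℓ : Fin M, D ℓ =
      (2 * η) • 1 + Matrix.of (fun i j => if ℓ ≤ i then Gt i j else 0)
        + Matrix.of (fun i j => if ℓ ≤ i then Gtᵀ i j else 0)) :
    ∀ ℓ : Fin M, (D ℓ).det ≠ 0 := by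
  intro ℓ hdet
  obtain ⟨v, hv0, hv⟩ := (Matrix.exists_mulVec_eq_zero_iff).mpr hdet
  -- entrywise description of D ℓ
  have hentry : ∀ i j : Fin M, D ℓ i j =
      if ℓ ≤ i then (G + Gᵀ) i j else (2 * η) * (if i = j then 1 else 0) := by
    intro i j
    rw [hD]
    by_cases h : ℓ ≤ i
    · simp [h, hGt, Matrix.one_apply, Matrix.sub_apply, Matrix.add_apply,
        Matrix.smul_apply, smul_eq_mul]
      by_cases hij : i = j
      · simp [hij]; ring
      · simp [hij]
        intro h'; exact absurd h'.symm hij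
    · simp [h, Matrix.one_apply, Matrix.add_apply, Matrix.smul_apply, smul_eq_mul]
  have hrow : ∀ i : Fin M, (D ℓ *ᵥ v) i =
      if ℓ ≤ i then ((G + Gᵀ) *ᵥ v) i else 2 * η * v i := by
    intro i
    by_cases h : ℓ ≤ i
    · simp only [h, if_true, Matrix.mulVec, dotProduct]
      refine Finset.sum_congr rfl fun j _ => ?_
      rw [hentry i j, if_pos h]
    · simp only [h, if_false, Matrix.mulVec, dotProduct]
      rw [Finset.sum_eq_single i]
      · rw [hentry i i]; simp [h]
      · intro j _ hji
        rw [hentry i j]; simp [h, Ne.symm hji]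
      · intro hi; exact absurd (Finset.mem_univ i) hi
  have hz1 : ∀ i : Fin M, ¬ ℓ ≤ i → v i = 0 := by
    intro i h
    have := congrFun hv i
    rw [hrow i, if_neg h] at this
    simp at this
    rcases this with h' | h'
    · exact absurd h' hη.ne'
    · exact h'
  have hz2 : ∀ i : Fin M, ℓ ≤ i → ((G + Gᵀ) *ᵥ v) i = 0 := by
    intro i h
    have := congrFun hv i
    rwa [hrow i, if_pos h] at this
  have hq : v ⬝ᵥ ((G + Gᵀ) *ᵥ v) = 0 := by
    unfold dotProduct
    refine Finset.sum_eq_zero fun i _ => ?_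
    by_cases h : ℓ ≤ i
    · rw [hz2 i h, mul_zero]
    · rw [hz1 i h, zero_mul]
  have hpos := hpd.re_dotProduct_pos hv0
  simp only [RCLike.re_to_real, star_trivial] at hpos
  rw [hq] at hpos
  exact lt_irrefl 0 hpos
end
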